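/- arXiv:1512.06438 — 2 statements merged into one kernel-verified Lean document; each statement's English description precedes it below -/
import Mathlib

section
/- Let Z_d be the set of all vertices of generation number d in D_{m,k}. Then every connected component of the graph D_{m,k} with Z_d deleted has diameter (in the shortest path metric of D_{m,k}) strictly less than 2^d. -/
/-!
Generation `d + 1` of `D_{m+1}` is generation `d` of `D_m`, carried along by the last
subdivision. Every vertex of `D_{m+1}` outside it is at distance at most one from an old vertex
outside generation `d` (a new midpoint has such an endpoint since generations are independent
sets), and along an edge of `D_{m+1}` these projections stay in one component of `D_m` minus
generation `d`. Distances at most double under subdivision, so a bound `L` on the diameters of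
the components becomes `2 L + 2`. Deleting generation `1` leaves only isolated vertices, so
`L = 0` there, and generation `d` gets the bound `2 ^ d - 2`.
-/

open SimpleGraph

/-- One subdivision step: replace each edge of `G` by internally disjoint
paths of length 2 indexed by `ι`. -/
def diamondStep {V : Type} (ι : Type) (G : SimpleGraph V) :
    SimpleGraph (V ⊕ (G.edgeSet × ι)) where
  Adj x y :=
    match x, y with
    | Sum.inl u, Sum.inr e => u ∈ (e.1 : Sym2 V)
    | Sum.inr e, Sum.inl u => u ∈ (e.1 : Sym2 V)
    | _, _ => False
  symm := ⟨by rintro (u | e) (v | f) h <;> simp_all⟩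
  loopless := ⟨by rintro (u | e) h <;> simp_all⟩

/-- The diamond graphs `D_{n,k}` with branch index type `ι` (take `ι = Fin k`
for branching `k` and `ι = ℕ` for infinite branching). -/
def Diamond (ι : Type) : (n : ℕ) → Σ V : Type, SimpleGraph V
  | 0 => ⟨Bool, ⊤⟩
  | n + 1 => ⟨_, diamondStep ι (Diamond ι n).2⟩

/-- Vertex set of the diamond graph. -/
abbrev diamV (ι : Type) (n : ℕ) : Type := (Diamond ι n).1

/-- The diamond graph as a `SimpleGraph`. -/
abbrev diamG (ι : Type) (n : ℕ) : SimpleGraph (diamV ι n) := (Diamond ι n).2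

/-- The two original vertices: `diamOrig ι n false` is the bottom,
`diamOrig ι n true` is the top of `D_{n,k}`. -/
def diamOrig (ι : Type) : (n : ℕ) → Bool → diamV ι n
  | 0, b => b
  | n + 1, b => Sum.inl (diamOrig ι n b)

/-- The bottom vertex of the diamond. -/
def diamBottom (ι : Type) (n : ℕ) : diamV ι n := diamOrig ι n false

/-- The top vertex of the diamond. -/
def diamTop (ι : Type) (n : ℕ) : diamV ι n := diamOrig ι n true

/-- The canonical injection of `D_{n,k}` into `D_{n+j,k}`: each vertex is sent to
the vertex it evolves into. -/
def diamLift (ι : Type) (n : ℕ) : (j : ℕ) → diamV ι n → diamV ι (n + j)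
  | 0, x => x
  | j + 1, x => Sum.inl (diamLift ι n j x)

/-- The complete binary tree of depth `n`: vertices are binary strings of
length `≤ n`. -/
def treeV (n : ℕ) : Type := {l : List Bool // l.length ≤ n}

/-- The graph structure of the binary tree `T_n`: a vertex is adjacent to its
one-letter extensions. -/
def treeG (n : ℕ) : SimpleGraph (treeV n) where
  Adj u v := (∃ b, v.1 = b :: u.1) ∨ (∃ b, u.1 = b :: v.1)
  symm := by tauto
  loopless := ⟨by
    rintro ⟨l, hl⟩ (⟨b, hb⟩ | ⟨b, hb⟩) <;>
      simpa using congrArg List.length hb⟩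

/-- The root of the binary tree. -/
def treeRoot (n : ℕ) : treeV n := ⟨[], by simp⟩

/-- The midpoint vertex of one of the `k` paths of length 2 replacing the edge
`uv` at the next construction step. -/
def diamMid (ι : Type) {j : ℕ} {u v : diamV ι j} (h : (diamG ι j).Adj u v) (i : ι) :
    diamV ι (j + 1) :=
  Sum.inr (⟨s(u, v), (diamG ι j).mem_edgeSet.mpr h⟩, i)

lemma diamMid_adj_left (ι : Type) {j : ℕ} {u v : diamV ι j}
    (h : (diamG ι j).Adj u v) (i : ι) :
    (diamG ι (j + 1)).Adj (Sum.inl u) (diamMid ι h i) := by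
  show u ∈ (s(u,v) : Sym2 (diamV ι j))
  exact Sym2.mem_mk_left u v

lemma diamMid_adj_right (ι : Type) {j : ℕ} {u v : diamV ι j}
    (h : (diamG ι j).Adj u v) (i : ι) :
    (diamG ι (j + 1)).Adj (diamMid ι h i) (Sum.inl v) := by
  show v ∈ (s(u,v) : Sym2 (diamV ι j))
  exact Sym2.mem_mk_right u v

/-- The graph homomorphism of `D_{q,k}` onto the subdiamond of `D_{j+q,k}` that
evolved from the edge `uv` of `D_{j,k}`. Its range is that subdiamond. -/
def subEmbed (ι : Type) {j : ℕ} {u v : diamV ι j} (h : (diamG ι j).Adj u v) :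
    (q : ℕ) → (diamG ι q) →g (diamG ι (j + q))
  | 0 =>
    ⟨fun b => bif b then u else v, by
      rintro a b hab
      have hab' : a ≠ b := hab
      cases a <;> cases b
      · exact absurd rfl hab'
      · exact h.symm
      · exact h
      · exact absurd rfl hab'⟩
  | q + 1 =>
    let f := subEmbed ι h q
    ⟨Sum.map f (fun p => (f.mapEdgeSet p.1, p.2)), by
      rintro (a | e) (b | e') hab <;> try exact hab.elim
      · show f a ∈ (Sym2.map f e'.1.1 : Sym2 (diamV ι (j + q)))
        exact Sym2.mem_map.mpr ⟨_, hab, rfl⟩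
      · show f b ∈ (Sym2.map f e.1.1 : Sym2 (diamV ι (j + q)))
        exact Sym2.mem_map.mpr ⟨_, hab, rfl⟩⟩

namespace SimpleGraph

variable {V : Type} {G : SimpleGraph V}

def ComponentsDistLE (G : SimpleGraph V) (S : Set V) (L : ℕ) : Prop :=
  ∀ ⦃u v : V⦄ (hu : u ∉ S) (hv : v ∉ S),
    (G.induce Sᶜ).Reachable ⟨u, hu⟩ ⟨v, hv⟩ → G.dist u v ≤ L

lemma componentsDistLE_zero_of_isIndepSet_compl {S : Set V} (hS : G.IsIndepSet Sᶜ) :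
    G.ComponentsDistLE S 0 := by
  intro u v hu hv huv
  have hbot : G.induce Sᶜ = ⊥ := by
    ext a b
    exact ⟨fun h => hS a.2 b.2 (G.ne_of_adj h) h, False.elim⟩
  rw [hbot, reachable_bot] at huv
  cases huv
  simp

end SimpleGraph

namespace diamondStep

variable {V ι : Type} {G : SimpleGraph V}

lemma isIndepSet_range_inl : (diamondStep ι G).IsIndepSet (Set.range Sum.inl) := by
  rintro _ ⟨u, rfl⟩ _ ⟨v, rfl⟩ _ h
  exact h

lemma isIndepSet_range_inr : (diamondStep ι G).IsIndepSet (Set.range Sum.inr) := by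
  rintro _ ⟨u, rfl⟩ _ ⟨v, rfl⟩ _ h
  exact h

lemma adj_inl_inr {a : V} {e : G.edgeSet} {i : ι} :
    (diamondStep ι G).Adj (Sum.inl a) (Sum.inr (e, i)) ↔ a ∈ (e : Sym2 V) :=
  .rfl

lemma adj_inr_inl {a : V} {e : G.edgeSet} {i : ι} :
    (diamondStep ι G).Adj (Sum.inr (e, i)) (Sum.inl a) ↔ a ∈ (e : Sym2 V) :=
  .rfl

end diamondStep

namespace SimpleGraph.Walk

variable {V ι : Type} {G : SimpleGraph V}

def subdivide (i : ι) : ∀ {a b : V}, G.Walk a b →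
    (diamondStep ι G).Walk (Sum.inl a) (Sum.inl b)
  | _, _, .nil => .nil
  | a, _, .cons (v := c) h W =>
    .cons (diamondStep.adj_inl_inr (e := ⟨s(a, c), h⟩) (i := i) |>.mpr (Sym2.mem_mk_left a c))
      (.cons (diamondStep.adj_inr_inl.mpr (Sym2.mem_mk_right a c)) (W.subdivide i))

lemma length_subdivide (i : ι) {a b : V} (W : G.Walk a b) :
    (W.subdivide i).length = 2 * W.length := by
  induction W with
  | nil => rfl
  | cons h W ih =>
    simp only [subdivide, length_cons, ih]
    ring

end SimpleGraph.Walk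

namespace diamondStep

variable {V ι : Type} {G : SimpleGraph V}

def ProjectsTo (u : V ⊕ (G.edgeSet × ι)) (a : V) : Prop :=
  u = Sum.inl a ∨ (diamondStep ι G).Adj u (Sum.inl a)

lemma projectsTo_inl_iff {c a : V} : ProjectsTo (G := G) (ι := ι) (Sum.inl c) a ↔ c = a := by
  refine ⟨?_, fun h => .inl (h ▸ rfl)⟩
  rintro (h | h)
  · exact Sum.inl.inj h
  · exact h.elim

lemma ProjectsTo.exists_walk {u : V ⊕ (G.edgeSet × ι)} {a : V} (h : ProjectsTo u a) :
    ∃ W : (diamondStep ι G).Walk u (Sum.inl a), W.length ≤ 1 := by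
  rcases h with rfl | hadj
  · exact ⟨.nil, zero_le_one⟩
  · exact ⟨hadj.toWalk, le_rfl⟩

lemma ProjectsTo.eq_or_adj {u : V ⊕ (G.edgeSet × ι)} {a b : V} (ha : ProjectsTo u a)
    (hb : ProjectsTo u b) : a = b ∨ G.Adj a b := by
  rcases u with c | ⟨⟨e, he⟩, i⟩
  · exact .inl ((projectsTo_inl_iff.mp ha).symm.trans (projectsTo_inl_iff.mp hb))
  · have hab : a ∈ e ∧ b ∈ e :=
      ⟨adj_inr_inl.mp (ha.resolve_left Sum.inr_ne_inl),
        adj_inr_inl.mp (hb.resolve_left Sum.inr_ne_inl)⟩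
    by_cases hne : a = b
    · exact .inl hne
    · rw [Sym2.mem_and_mem_iff hne] at hab
      exact .inr (G.mem_edgeSet.mp (hab ▸ he))

variable {S : Set V}

lemma exists_projectsTo_of_isIndepSet (hS : G.IsIndepSet S) {u : V ⊕ (G.edgeSet × ι)}
    (hu : u ∉ Sum.inl '' S) : ∃ a ∉ S, ProjectsTo u a := by
  rcases u with c | ⟨e, i⟩
  · exact ⟨c, fun hc => hu ⟨c, hc, rfl⟩, .inl rfl⟩
  · obtain ⟨a, ha, hae⟩ := IsIndepSet.nonempty_mem_compl_mem_edge G hS e.2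
    exact ⟨a, ha, .inr (adj_inr_inl.mpr hae)⟩

lemma exists_projectsTo_of_adj {u w : V ⊕ (G.edgeSet × ι)} (h : (diamondStep ι G).Adj u w)
    (hu : u ∉ Sum.inl '' S) (hw : w ∉ Sum.inl '' S) :
    ∃ c ∉ S, ProjectsTo u c ∧ ProjectsTo w c := by
  rcases u with c | _ <;> rcases w with d | _
  · exact h.elim
  · exact ⟨c, fun hc => hu ⟨c, hc, rfl⟩, .inl rfl, .inr h.symm⟩
  · exact ⟨d, fun hd => hw ⟨d, hd, rfl⟩, .inr h, .inl rfl⟩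
  · exact h.elim

lemma exists_projectsTo_of_reachable {u v : ↥(Sum.inl '' S)ᶜ}
    (huv : ((diamondStep ι G).induce (Sum.inl '' S)ᶜ).Reachable u v) (a : ↥Sᶜ)
    (ha : ProjectsTo u.1 a.1) :
    ∃ b : ↥Sᶜ, ProjectsTo v.1 b.1 ∧ (G.induce Sᶜ).Reachable a b := by
  obtain ⟨W⟩ := huv
  induction W generalizing a with
  | nil => exact ⟨a, ha, .rfl⟩
  | @cons u w v h _ ih =>
    obtain ⟨c, hc, huc, hwc⟩ := exists_projectsTo_of_adj h u.2 w.2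
    obtain ⟨b, hvb, hcb⟩ := ih ⟨c, hc⟩ hwc
    have hac : (G.induce Sᶜ).Reachable a ⟨c, hc⟩ := by
      rcases ha.eq_or_adj huc with hac | hac
      · obtain rfl : a = ⟨c, hc⟩ := Subtype.ext hac
        exact .rfl
      · exact Adj.reachable hac
    exact ⟨b, hvb, hac.trans hcb⟩

end diamondStep

open diamondStep in
lemma SimpleGraph.ComponentsDistLE.diamondStep {V ι : Type} [Nonempty ι] {G : SimpleGraph V}
    {S : Set V} {L : ℕ} (hS : G.IsIndepSet S) (h : G.ComponentsDistLE S L) :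
    (_root_.diamondStep ι G).ComponentsDistLE (Sum.inl '' S) (2 * L + 2) := by
  intro u v hu hv huv
  obtain ⟨i⟩ := ‹Nonempty ι›
  obtain ⟨a, ha, hua⟩ := exists_projectsTo_of_isIndepSet hS hu
  obtain ⟨⟨b, hb⟩, hvb, hab⟩ := exists_projectsTo_of_reachable huv ⟨a, ha⟩ hua
  obtain ⟨W, hW⟩ : ∃ W : G.Walk a b, W.length = G.dist a b :=
    (hab.map (Embedding.induce Sᶜ).toHom).exists_walk_length_eq_dist
  obtain ⟨W₁, hW₁⟩ := hua.exists_walk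
  obtain ⟨W₃, hW₃⟩ := hvb.exists_walk
  calc (_root_.diamondStep ι G).dist u v
      ≤ (W₁.append ((W.subdivide i).append W₃.reverse)).length := dist_le _
    _ ≤ 1 + 2 * L + 1 := by
      simp only [Walk.length_append, Walk.length_reverse, Walk.length_subdivide, hW]
      have := h ha hb hab
      omega
    _ = 2 * L + 2 := by ring

/-- Generation `q + 1` of `D_{j+1+q}`: the vertices created at step `j + 1`. -/
def generation (ι : Type) (j q : ℕ) : Set (diamV ι (j + 1 + q)) :=
  Set.range (fun w : ((diamG ι j).edgeSet × ι) => diamLift ι (j + 1) q (Sum.inr w))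

lemma generation_succ (ι : Type) (j q : ℕ) :
    generation ι j (q + 1) = (Sum.inl '' generation ι j q : Set (diamV ι (j + 1 + (q + 1)))) :=
  Set.range_comp Sum.inl fun w : (diamG ι j).edgeSet × ι => diamLift ι (j + 1) q (Sum.inr w)

lemma isIndepSet_generation (ι : Type) (j : ℕ) :
    ∀ q, (diamG ι (j + 1 + q)).IsIndepSet (generation ι j q)
  | 0 => diamondStep.isIndepSet_range_inr
  | q + 1 => by
    rw [generation_succ]
    exact diamondStep.isIndepSet_range_inl.mono (Set.image_subset_range _ _)

lemma componentsDistLE_generation (ι : Type) [Nonempty ι] (j : ℕ) :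
    ∀ q, (diamG ι (j + 1 + q)).ComponentsDistLE (generation ι j q) (2 ^ (q + 1) - 2)
  | 0 => componentsDistLE_zero_of_isIndepSet_compl <| by
    show (diamondStep ι (diamG ι j)).IsIndepSet (Set.range Sum.inr)ᶜ
    rw [Set.compl_range_inr]
    exact diamondStep.isIndepSet_range_inl
  | q + 1 => by
    have hstep := (componentsDistLE_generation ι j q).diamondStep (ι := ι)
      (isIndepSet_generation ι j q)
    have hpow : 2 * (2 ^ (q + 1) - 2) + 2 = 2 ^ (q + 1 + 1) - 2 := by
      have : 2 ≤ 2 ^ (q + 1) := Nat.le_self_pow (Nat.succ_ne_zero q) 2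
      rw [pow_succ 2 (q + 1)]
      omega
    rw [generation_succ, ← hpow]
    exact hstep

theorem components_after_deleting_generation (ι : Type) [Nontrivial ι] (j q : ℕ)
    (Z : Set (diamV ι (j + 1 + q)))
    (hZ : Z = Set.range (fun w : ((diamG ι j).edgeSet × ι) =>
      diamLift ι (j + 1) q (Sum.inr w)))
    (x y : diamV ι (j + 1 + q)) (hx : x ∉ Z) (hy : y ∉ Z)
    (hreach : ((diamG ι (j + 1 + q)).induce Zᶜ).Reachable ⟨x, hx⟩ ⟨y, hy⟩) :
    (diamG ι (j + 1 + q)).dist x y < 2 ^ (q + 1) := by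
  subst hZ
  have hdist := componentsDistLE_generation ι j q hx hy hreach
  have hpos := Nat.two_pow_pos (q + 1)
  omega
end

section
/- Suppose F: T_n → D_{m,k} satisfies 2^p·d(u,v) ≤ d(F(u),F(v)) ≤ α·2^p·d(u,v) for all vertices u,v, where p ≥ 0 is an integer. Suppose integers d and r with 1 ≤ r < n satisfy 2^{d−1} > α·2^p·(r+1), (2k)^{d−p} < 2^r, and 2^d < 2^p·(n−r). Then a contradiction follows; i.e., no such F, d, r can simultaneously exist. -/
open SimpleGraph

/-!
Follow a path of length `n - r` down from the root of `T_n`. Its image under `F` has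
endpoints more than `2 ^ d` apart, and joining consecutive image points by geodesics gives a walk
staying within `α 2 ^ p` of the image. A walk avoiding the vertices of generation `d` stays in the
subdiamonds around one older vertex, hence between points at most `2 ^ d` apart; so the walk meets
a vertex `w` of generation `d` close to the image of some path vertex `x`. The `2 ^ r` descendants
of `x` that are `r` levels below it are pairwise at distance `2`, so their images are more than
`2 ^ p` apart, and they lie within `α 2 ^ p (r + 1) < 2 ^ (d - 1)` of `w`. That ball is contained
in the two subdiamonds at `w`, which together consist of `2 (2k) ^ (d - 1 - p)` subdiamonds of
diameter `2 ^ p`, each containing at most one of the images. Hence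
`2 ^ r ≤ 2 (2k) ^ (d - 1 - p) ≤ (2k) ^ (d - p)`.
-/

namespace SimpleGraph

variable {V W : Type*} {G : SimpleGraph V} {H : SimpleGraph W}

theorem Connected.dist_map_le (hG : G.Connected) (f : G →g H) (x y : V) :
    H.dist (f x) (f y) ≤ G.dist x y := by
  obtain ⟨w, hw⟩ := hG.exists_walk_length_eq_dist x y
  simpa [hw] using dist_le (w.map f)

theorem Connected.dist_le_mul_dist (hG : G.Connected) (hH : H.Connected) {F : V → W} {L : ℕ}
    (hF : ∀ x y, G.Adj x y → H.dist (F x) (F y) ≤ L) (x y : V) :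
    H.dist (F x) (F y) ≤ L * G.dist x y := by
  obtain ⟨w, hw⟩ := hG.exists_walk_length_eq_dist x y
  rw [← hw]
  clear hw
  induction w with
  | nil => simp
  | @cons a b c h w ih =>
    have := hH.dist_triangle (u := F a) (v := F b) (w := F c)
    have := hF a b h
    rw [Walk.length_cons, mul_add_one]
    omega

theorem dist_le_one_of_mem_edgeSet {e : Sym2 V} (he : e ∈ G.edgeSet) {x y : V}
    (hx : x ∈ e) (hy : y ∈ e) : G.dist x y ≤ 1 := by
  induction e using Sym2.ind with
  | _ a b =>
    rw [mem_edgeSet] at he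
    rw [Sym2.mem_iff] at hx hy
    rcases hx with rfl | rfl <;> rcases hy with rfl | rfl <;>
      simp [dist_eq_one_iff_adj.mpr he, dist_eq_one_iff_adj.mpr he.symm]

theorem Adj.dist_le_dist_add_one {x y : V} (h : G.Adj x y) (z : V) :
    G.dist x z ≤ G.dist y z + 1 := by
  rw [dist_comm, dist_comm (u := y)]
  rcases h.symm.diff_dist_adj (u := z) with h' | h' | h' <;> omega

theorem Walk.dist_le_length_of_mem_support {a b y : V} (w : G.Walk a b) (hy : y ∈ w.support) :
    G.dist a y ≤ w.length := by
  classical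
  exact (dist_le _).trans (w.length_takeUntil_le_length hy)

theorem Connected.exists_walk_near (hG : G.Connected) (x : ℕ → V) {N : ℕ} (hN : 0 < N) :
    ∃ w : G.Walk (x 0) (x N),
      ∀ y ∈ w.support, ∃ s < N, G.dist (x s) y ≤ G.dist (x s) (x (s + 1)) := by
  induction N, hN using Nat.le_induction with
  | base =>
    obtain ⟨w, hw⟩ := hG.exists_walk_length_eq_dist (x 0) (x 1)
    exact ⟨w, fun y hy => ⟨0, one_pos, hw ▸ w.dist_le_length_of_mem_support hy⟩⟩
  | succ N _ ih =>
    obtain ⟨w, hw⟩ := ih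
    obtain ⟨g, hg⟩ := hG.exists_walk_length_eq_dist (x N) (x (N + 1))
    refine ⟨w.append g, fun y hy => ?_⟩
    rw [Walk.mem_support_append_iff] at hy
    rcases hy with hy | hy
    · obtain ⟨s, hs, hsy⟩ := hw y hy
      exact ⟨s, by omega, hsy⟩
    · exact ⟨N, by omega, hg ▸ g.dist_le_length_of_mem_support hy⟩

end SimpleGraph

section Diamond

variable {ι : Type}

theorem diamG_succ_adj_cases {t : ℕ} {x y : diamV ι (t + 1)} (h : (diamG ι (t + 1)).Adj x y) :
    (∃ u z, x = Sum.inl u ∧ y = Sum.inr z ∧ u ∈ z.1.1) ∨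
      (∃ u z, x = Sum.inr z ∧ y = Sum.inl u ∧ u ∈ z.1.1) := by
  match x, y, h with
  | Sum.inl u, Sum.inr z, h => exact .inl ⟨u, z, rfl, rfl, h⟩
  | Sum.inr z, Sum.inl u, h => exact .inr ⟨u, z, rfl, rfl, h⟩

theorem diamG_succ_mem_edgeSet {t : ℕ} {e : Sym2 (diamV ι (t + 1))}
    (he : e ∈ (diamG ι (t + 1)).edgeSet) : ∃ u z, e = s(Sum.inl u, Sum.inr z) ∧ u ∈ z.1.1 := by
  induction e using Sym2.ind with
  | _ x y =>
    rcases diamG_succ_adj_cases he with ⟨u, z, rfl, rfl, hu⟩ | ⟨u, z, rfl, rfl, hu⟩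
    · exact ⟨u, z, rfl, hu⟩
    · exact ⟨u, z, Sym2.eq_swap, hu⟩

theorem exists_diamG_adj [Nonempty ι] : ∀ (t : ℕ) (x : diamV ι t), ∃ y, (diamG ι t).Adj x y
  | 0, b => ⟨!b, fun h => by cases b <;> cases h⟩
  | t + 1, Sum.inl u => by
    obtain ⟨v, hv⟩ := exists_diamG_adj t u
    exact ⟨_, diamMid_adj_left ι hv (Classical.arbitrary ι)⟩
  | t + 1, Sum.inr ⟨⟨e, he⟩, i⟩ => by
    induction e using Sym2.ind with
    | _ a b => exact ⟨Sum.inl a, (diamMid_adj_left ι he i).symm⟩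

theorem exists_walk_inl_length_eq [Nonempty ι] {t : ℕ} {x y : diamV ι t}
    (w : (diamG ι t).Walk x y) :
    ∃ w' : (diamG ι (t + 1)).Walk (Sum.inl x) (Sum.inl y), w'.length = 2 * w.length := by
  induction w with
  | nil => exact ⟨.nil, rfl⟩
  | cons h w ih =>
    obtain ⟨w', hw'⟩ := ih
    let i := Classical.arbitrary ι
    exact ⟨.cons (diamMid_adj_left ι h i) (.cons (diamMid_adj_right ι h i) w'), by
      change w'.length + 1 + 1 = 2 * (w.length + 1); omega⟩

theorem exists_reachable_inl {t : ℕ} (x : diamV ι (t + 1)) :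
    ∃ u, (diamG ι (t + 1)).Reachable x (Sum.inl u) := by
  rcases x with u | ⟨⟨e, he⟩, i⟩
  · exact ⟨u, .rfl⟩
  · induction e using Sym2.ind with
    | _ a b => exact ⟨a, (diamMid_adj_left ι he i).symm.reachable⟩

theorem diamG_connected [Nonempty ι] : ∀ t, (diamG ι t).Connected
  | 0 => show (⊤ : SimpleGraph Bool).Connected from connected_top
  | t + 1 => by
    refine (connected_iff _).mpr ⟨fun x y => ?_, ⟨Sum.inl (diamBottom ι t)⟩⟩
    obtain ⟨u, hu⟩ := exists_reachable_inl x
    obtain ⟨v, hv⟩ := exists_reachable_inl y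
    obtain ⟨w⟩ := (diamG_connected t).preconnected u v
    obtain ⟨w', -⟩ := exists_walk_inl_length_eq w
    exact hu.trans (w'.reachable.trans hv.symm)

theorem two_mul_dist_le_length [Nonempty ι] {t : ℕ} (L : ℕ) :
    ∀ {x y : diamV ι t} (w : (diamG ι (t + 1)).Walk (Sum.inl x) (Sum.inl y)),
      w.length = L → 2 * (diamG ι t).dist x y ≤ L := by
  induction L using Nat.strong_induction_on with
  | _ L ih =>
    intro x y w hw
    cases w with
    | nil => simp
    | cons h w =>
      rcases diamG_succ_adj_cases h with ⟨_, z, hx, rfl, hxz⟩ | ⟨_, _, hx, _, _⟩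
      · cases w with
        | cons h' w =>
          rcases diamG_succ_adj_cases h' with ⟨_, _, hz, _, _⟩ | ⟨x', _, hz, rfl, hx'z⟩
          · cases hz
          · cases hz
            cases hx
            have hxx' : (diamG ι t).dist x x' ≤ 1 := dist_le_one_of_mem_edgeSet z.1.2 hxz hx'z
            have := (diamG_connected t).dist_triangle (u := x) (v := x') (w := y)
            change w.length + 1 + 1 = L at hw
            have := ih w.length (by omega) w rfl
            omega
      · cases hx

theorem diamG_dist_inl [Nonempty ι] {t : ℕ} (x y : diamV ι t) :
    (diamG ι (t + 1)).dist (Sum.inl x) (Sum.inl y) = 2 * (diamG ι t).dist x y := by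
  apply le_antisymm
  · obtain ⟨w, hw⟩ := (diamG_connected t).exists_walk_length_eq_dist x y
    obtain ⟨w', hw'⟩ := exists_walk_inl_length_eq w
    exact hw ▸ hw' ▸ dist_le w'
  · obtain ⟨w, hw⟩ := (diamG_connected (t + 1)).exists_walk_length_eq_dist (Sum.inl x) (Sum.inl y)
    exact two_mul_dist_le_length _ w hw

theorem diamG_dist_diamLift [Nonempty ι] (t : ℕ) : ∀ (q : ℕ) (x y : diamV ι t),
    (diamG ι (t + q)).dist (diamLift ι t q x) (diamLift ι t q y) = 2 ^ q * (diamG ι t).dist x y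
  | 0, x, y => by simp [diamLift]
  | q + 1, x, y => by
    rw [pow_succ, mul_comm _ 2, mul_assoc, ← diamG_dist_diamLift t q]
    exact diamG_dist_inl _ _

def diamFlip (ι : Type) : (q : ℕ) → diamG ι q →g diamG ι q
  | 0 => ⟨not, fun {a b} (h : a ≠ b) => show (!a) ≠ (!b) from fun h' => h (Bool.not_inj_iff.mp h')⟩
  | q + 1 =>
    let f := diamFlip ι q
    ⟨Sum.map f fun e => (f.mapEdgeSet e.1, e.2), by
      rintro (a | e) (b | e') hab <;> try exact hab.elim
      · exact Sym2.mem_map.mpr ⟨_, hab, rfl⟩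
      · exact Sym2.mem_map.mpr ⟨_, hab, rfl⟩⟩

theorem diamFlip_diamFlip : ∀ (q : ℕ) (x : diamV ι q), diamFlip ι q (diamFlip ι q x) = x
  | 0, b => b.not_not
  | q + 1, Sum.inl x => congrArg Sum.inl (diamFlip_diamFlip q x)
  | q + 1, Sum.inr ⟨⟨e, he⟩, i⟩ => by
    induction e using Sym2.ind with
    | _ a b =>
      exact congrArg (fun e => Sum.inr (e, i)) <| Subtype.ext <|
        congrArg₂ (fun x y => s(x, y)) (diamFlip_diamFlip q a) (diamFlip_diamFlip q b)

theorem diamFlip_diamOrig : ∀ (q : ℕ) (b : Bool), diamFlip ι q (diamOrig ι q b) = diamOrig ι q !b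
  | 0, _ => rfl
  | q + 1, b => congrArg Sum.inl (diamFlip_diamOrig q b)

/-- The top has height `2 ^ t`, and a new vertex sits halfway between its two neighbours. -/
def diamHt (ι : Type) : (t : ℕ) → diamV ι t → ℕ
  | 0, b => cond b 1 0
  | t + 1, Sum.inl u => 2 * diamHt ι t u
  | t + 1, Sum.inr z =>
    Sym2.lift ⟨fun a b => diamHt ι t a + diamHt ι t b, fun _ _ => Nat.add_comm _ _⟩ z.1.1

theorem diamHt_add_diamHt_diamFlip :
    ∀ (t : ℕ) (x : diamV ι t), diamHt ι t x + diamHt ι t (diamFlip ι t x) = 2 ^ t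
  | 0, b => by cases b <;> rfl
  | t + 1, Sum.inl u => by
    have := diamHt_add_diamHt_diamFlip t u
    change 2 * _ + 2 * _ = _
    rw [pow_succ]
    omega
  | t + 1, Sum.inr ⟨⟨e, he⟩, i⟩ => by
    induction e using Sym2.ind with
    | _ a b =>
      have ha := diamHt_add_diamHt_diamFlip t a
      have hb := diamHt_add_diamHt_diamFlip t b
      change diamHt ι t a + diamHt ι t b +
        (diamHt ι t (diamFlip ι t a) + diamHt ι t (diamFlip ι t b)) = _
      rw [pow_succ]
      omega

theorem diamHt_adj : ∀ (t : ℕ) {x y : diamV ι t}, (diamG ι t).Adj x y →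
    diamHt ι t x + 1 = diamHt ι t y ∨ diamHt ι t y + 1 = diamHt ι t x
  | 0, x, y, h => by
    cases x <;> cases y <;> first | exact absurd rfl h | exact .inl rfl | exact .inr rfl
  | t + 1, x, y, h => by
    rcases diamG_succ_adj_cases h with
      ⟨u, ⟨⟨e, he⟩, i⟩, rfl, rfl, hu⟩ | ⟨u, ⟨⟨e, he⟩, i⟩, rfl, rfl, hu⟩ <;>
    · induction e using Sym2.ind with
      | _ a b =>
        have hab : diamHt ι t a + 1 = diamHt ι t b ∨ diamHt ι t b + 1 = diamHt ι t a :=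
          diamHt_adj t he
        replace hu : u = a ∨ u = b := Sym2.mem_iff.mp hu
        simp only [diamHt, Sym2.lift_mk]
        rcases hu with rfl | rfl <;> omega

theorem dist_diamBottom_le [Nonempty ι] : ∀ (t : ℕ) (x : diamV ι t),
    (diamG ι t).dist x (diamBottom ι t) ≤ diamHt ι t x
  | 0, false => (dist_self (G := diamG ι 0)).trans_le (Nat.zero_le _)
  | 0, true => dist_le (show (diamG ι 0).Adj true false from Bool.noConfusion).toWalk
  | t + 1, Sum.inl u => by
    change (diamG ι (t + 1)).dist (Sum.inl u) (Sum.inl (diamBottom ι t)) ≤ 2 * diamHt ι t u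
    rw [diamG_dist_inl]
    exact Nat.mul_le_mul_left 2 (dist_diamBottom_le t u)
  | t + 1, Sum.inr ⟨⟨e, he⟩, i⟩ => by
    induction e using Sym2.ind with
    | _ a b =>
      have hend : ∀ c ∈ s(a, b), (diamG ι (t + 1)).dist (Sum.inr (⟨s(a, b), he⟩, i))
          (diamBottom ι (t + 1)) ≤ 2 * diamHt ι t c + 1 := fun c hc => by
        have hadj : (diamG ι (t + 1)).Adj (Sum.inl c) (Sum.inr (⟨s(a, b), he⟩, i)) := hc
        refine (hadj.symm.dist_le_dist_add_one _).trans ?_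
        have := dist_diamBottom_le t c
        change (diamG ι (t + 1)).dist (Sum.inl c) (Sum.inl (diamBottom ι t)) + 1 ≤ _
        rw [diamG_dist_inl]
        omega
      have ha := hend a (Sym2.mem_mk_left a b)
      have hb := hend b (Sym2.mem_mk_right a b)
      have hab : diamHt ι t a + 1 = diamHt ι t b ∨ diamHt ι t b + 1 = diamHt ι t a :=
        diamHt_adj t he
      change _ ≤ diamHt ι t a + diamHt ι t b
      omega

theorem dist_diamBottom_add_dist_diamTop_le [Nonempty ι] (t : ℕ) (x : diamV ι t) :
    (diamG ι t).dist x (diamBottom ι t) + (diamG ι t).dist x (diamTop ι t) ≤ 2 ^ t := by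
  have htop : (diamG ι t).dist x (diamTop ι t) ≤
      (diamG ι t).dist (diamFlip ι t x) (diamBottom ι t) := by
    have := (diamG_connected t).dist_map_le (diamFlip ι t) (diamFlip ι t x) (diamBottom ι t)
    rwa [diamFlip_diamFlip, diamBottom, diamFlip_diamOrig] at this
  have := dist_diamBottom_le t x
  have := dist_diamBottom_le t (diamFlip ι t x)
  have := diamHt_add_diamHt_diamFlip t x
  omega

theorem diamG_dist_le [Nonempty ι] (t : ℕ) (x y : diamV ι t) : (diamG ι t).dist x y ≤ 2 ^ t := by
  have := (diamG_connected t).dist_triangle (u := x) (v := diamBottom ι t) (w := y)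
  have := (diamG_connected t).dist_triangle (u := x) (v := diamTop ι t) (w := y)
  have := dist_diamBottom_add_dist_diamTop_le t x
  have := dist_diamBottom_add_dist_diamTop_le t y
  rw [dist_comm (u := diamBottom ι t), dist_comm (u := diamTop ι t)] at *
  omega

end Diamond

section SubDiamond

variable {ι : Type} {t : ℕ}

theorem subEmbed_symm : ∀ (q : ℕ) (x : diamV ι q) {u v : diamV ι t} (h : (diamG ι t).Adj u v),
    subEmbed ι h.symm q x = subEmbed ι h q (diamFlip ι q x)
  | 0, b, _, _, _ => by cases b <;> rfl
  | q + 1, Sum.inl x, _, _, h => congrArg Sum.inl (subEmbed_symm q x h)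
  | q + 1, Sum.inr ⟨⟨e, he⟩, i⟩, _, _, h => by
    induction e using Sym2.ind with
    | _ a b =>
      exact congrArg (fun e => Sum.inr (e, i)) <| Subtype.ext <|
        congrArg₂ (fun x y => s(x, y)) (subEmbed_symm q a h) (subEmbed_symm q b h)

theorem range_subEmbed_symm {u v : diamV ι t} (h : (diamG ι t).Adj u v) (q : ℕ) :
    Set.range (subEmbed ι h.symm q) = Set.range (subEmbed ι h q) := by
  ext y
  constructor
  · rintro ⟨x, rfl⟩
    exact ⟨diamFlip ι q x, (subEmbed_symm q x h).symm⟩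
  · rintro ⟨x, rfl⟩
    exact ⟨diamFlip ι q x, by rw [subEmbed_symm, diamFlip_diamFlip]⟩

theorem range_subEmbed_eq {u₁ v₁ u₂ v₂ : diamV ι t} (h₁ : (diamG ι t).Adj u₁ v₁)
    (h₂ : (diamG ι t).Adj u₂ v₂) (he : s(u₁, v₁) = s(u₂, v₂)) (q : ℕ) :
    Set.range (subEmbed ι h₁ q) = Set.range (subEmbed ι h₂ q) := by
  rcases Sym2.eq_iff.mp he with ⟨rfl, rfl⟩ | ⟨rfl, rfl⟩
  · rfl
  · exact range_subEmbed_symm h₂ q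

theorem subEmbed_diamOrig {u v : diamV ι t} (h : (diamG ι t).Adj u v) :
    ∀ (q : ℕ) (b : Bool), subEmbed ι h q (diamOrig ι q b) = diamLift ι t q (bif b then u else v)
  | 0, _ => rfl
  | q + 1, b => congrArg Sum.inl (subEmbed_diamOrig h q b)

theorem exists_edge_eq_map_subEmbed [Nonempty ι] (t : ℕ) : ∀ (q : ℕ) (E : Sym2 (diamV ι (t + q))),
    E ∈ (diamG ι (t + q)).edgeSet →
      ∃ (u v : diamV ι t) (h : (diamG ι t).Adj u v) (E₀ : Sym2 (diamV ι q)),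
        E₀ ∈ (diamG ι q).edgeSet ∧ E = E₀.map (subEmbed ι h q)
  | 0, E, hE => by
    induction E using Sym2.ind with
    | _ a b => exact ⟨a, b, hE, s(true, false), Bool.noConfusion, rfl⟩
  | q + 1, E, hE => by
    obtain ⟨a, ⟨E', i⟩, rfl, ha⟩ := diamG_succ_mem_edgeSet hE
    obtain ⟨u, v, h, E₀, hE₀, hmap⟩ := exists_edge_eq_map_subEmbed t q E'.1 E'.2
    obtain ⟨a₀, ha₀, rfl⟩ := Sym2.mem_map.mp (hmap ▸ ha)
    refine ⟨u, v, h, s(Sum.inl a₀, Sum.inr (⟨E₀, hE₀⟩, i)), ha₀, ?_⟩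
    have : (subEmbed ι h q).mapEdgeSet ⟨E₀, hE₀⟩ = E' := Subtype.ext hmap.symm
    exact congrArg (fun E' => (s(Sum.inl (subEmbed ι h q a₀), Sum.inr (E', i)) :
      Sym2 (diamV ι (t + q + 1)))) this.symm

theorem exists_mem_range_subEmbed [Nonempty ι] (t : ℕ) : ∀ (q : ℕ) (x : diamV ι (t + q)),
    ∃ (u v : diamV ι t) (h : (diamG ι t).Adj u v), x ∈ Set.range (subEmbed ι h q)
  | 0, x => by
    obtain ⟨y, hy⟩ := exists_diamG_adj t x
    exact ⟨x, y, hy, true, rfl⟩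
  | q + 1, Sum.inl x => by
    obtain ⟨u, v, h, x₀, rfl⟩ := exists_mem_range_subEmbed t q x
    exact ⟨u, v, h, Sum.inl x₀, rfl⟩
  | q + 1, Sum.inr ⟨E', i⟩ => by
    obtain ⟨u, v, h, E₀, hE₀, hmap⟩ := exists_edge_eq_map_subEmbed t q E'.1 E'.2
    refine ⟨u, v, h, Sum.inr (⟨E₀, hE₀⟩, i), ?_⟩
    have : (subEmbed ι h q).mapEdgeSet ⟨E₀, hE₀⟩ = E' := Subtype.ext hmap.symm
    exact congrArg (fun E' => Sum.inr (E', i)) this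

theorem exists_diamLift_of_subEmbed_eq {u₁ v₁ u₂ v₂ : diamV ι t} (h₁ : (diamG ι t).Adj u₁ v₁)
    (h₂ : (diamG ι t).Adj u₂ v₂) (hne : s(u₁, v₁) ≠ s(u₂, v₂)) :
    ∀ (q : ℕ) (x y : diamV ι q), subEmbed ι h₁ q x = subEmbed ι h₂ q y →
      ∃ z, subEmbed ι h₁ q x = diamLift ι t q z ∧ z ∈ s(u₁, v₁) ∧ z ∈ s(u₂, v₂)
  | 0, x, y, hxy => by
    refine ⟨subEmbed ι h₁ 0 x, rfl, ?_, hxy ▸ ?_⟩ <;> [cases x; cases y] <;> simp [subEmbed]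
  | q + 1, Sum.inl x, Sum.inl y, hxy => by
    obtain ⟨z, hz, hz₁, hz₂⟩ := exists_diamLift_of_subEmbed_eq h₁ h₂ hne q x y (Sum.inl.inj hxy)
    exact ⟨z, congrArg Sum.inl hz, hz₁, hz₂⟩
  | q + 1, Sum.inr ⟨⟨E₁, hE₁⟩, i₁⟩, Sum.inr ⟨E₂, i₂⟩, hxy => by
    exfalso
    have hE : E₁.map (subEmbed ι h₁ q) = E₂.1.map (subEmbed ι h₂ q) :=
      congrArg (fun w => w.1.1) (Sum.inr.inj hxy)
    induction E₁ using Sym2.ind with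
    | _ a b =>
    have hlift : ∀ c ∈ s(a, b), ∃ z, subEmbed ι h₁ q c = diamLift ι t q z ∧
        z ∈ s(u₁, v₁) ∧ z ∈ s(u₂, v₂) := fun c hc => by
      have : subEmbed ι h₁ q c ∈ E₂.1.map (subEmbed ι h₂ q) := hE ▸ Sym2.mem_map.mpr ⟨c, hc, rfl⟩
      obtain ⟨c', -, hc'⟩ := Sym2.mem_map.mp this
      exact exists_diamLift_of_subEmbed_eq h₁ h₂ hne q c c' hc'.symm
    obtain ⟨za, hza, hza₁, hza₂⟩ := hlift a (Sym2.mem_mk_left a b)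
    obtain ⟨zb, hzb, hzb₁, hzb₂⟩ := hlift b (Sym2.mem_mk_right a b)
    have hadj : (diamG ι (t + q)).Adj (diamLift ι t q za) (diamLift ι t q zb) :=
      hza ▸ hzb ▸ (subEmbed ι h₁ q).map_adj hE₁
    -- Distinct lifts are never adjacent once `q > 0`; for `q = 0` the two edges would coincide.
    cases q with
    | zero =>
      exact hne (((Sym2.mem_and_mem_iff hadj.ne).mp ⟨hza₁, hzb₁⟩).trans
        ((Sym2.mem_and_mem_iff hadj.ne).mp ⟨hza₂, hzb₂⟩).symm)
    | succ q => exact hadj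

end SubDiamond

section Star

variable {ι : Type} {t q : ℕ}

def diamStar (ι : Type) (t q : ℕ) (c : diamV ι t) : Set (diamV ι (t + q)) :=
  {x | ∃ (v : diamV ι t) (h : (diamG ι t).Adj c v), x ∈ Set.range (subEmbed ι h q)}

theorem mem_diamStar_of_mem_range {u v c : diamV ι t} (h : (diamG ι t).Adj u v)
    (hc : c ∈ s(u, v)) {x : diamV ι (t + q)} (hx : x ∈ Set.range (subEmbed ι h q)) :
    x ∈ diamStar ι t q c := by
  rcases Sym2.mem_iff.mp hc with rfl | rfl
  · exact ⟨v, h, hx⟩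
  · exact ⟨u, h.symm, by rwa [range_subEmbed_symm]⟩

theorem diamLift_mem_diamStar [Nonempty ι] (c : diamV ι t) :
    diamLift ι t q c ∈ diamStar ι t q c := by
  obtain ⟨v, hv⟩ := exists_diamG_adj t c
  exact ⟨v, hv, diamOrig ι q true, subEmbed_diamOrig hv q true⟩

theorem dist_diamLift_le_of_mem_diamStar [Nonempty ι] {c : diamV ι t} {x : diamV ι (t + q)}
    (hx : x ∈ diamStar ι t q c) : (diamG ι (t + q)).dist x (diamLift ι t q c) ≤ 2 ^ q := by
  obtain ⟨v, h, x₀, rfl⟩ := hx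
  calc (diamG ι (t + q)).dist (subEmbed ι h q x₀) (diamLift ι t q c)
      = (diamG ι (t + q)).dist (subEmbed ι h q x₀) (subEmbed ι h q (diamOrig ι q true)) := by
        rw [subEmbed_diamOrig]; rfl
    _ ≤ (diamG ι q).dist x₀ (diamOrig ι q true) := (diamG_connected q).dist_map_le _ _ _
    _ ≤ 2 ^ q := diamG_dist_le q _ _

theorem mem_diamStar_or_of_adj [Nonempty ι] {c : diamV ι t} {x y : diamV ι (t + q)}
    (hx : x ∈ diamStar ι t q c) (hxy : (diamG ι (t + q)).Adj x y) :
    y ∈ diamStar ι t q c ∨ ∃ z, (diamG ι t).Adj c z ∧ x = diamLift ι t q z := by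
  obtain ⟨v, h, x₁, rfl⟩ := hx
  obtain ⟨u', v', h', E₀, -, hE⟩ := exists_edge_eq_map_subEmbed t q _ ((mem_edgeSet _).mpr hxy)
  obtain ⟨x', -, hx'⟩ := Sym2.mem_map.mp (hE ▸ Sym2.mem_mk_left _ y)
  obtain ⟨y', -, hy'⟩ := Sym2.mem_map.mp (hE ▸ Sym2.mem_mk_right (subEmbed ι h q x₁) y)
  by_cases hs : s(c, v) = s(u', v')
  · exact .inl ⟨v, h, by rw [range_subEmbed_eq h h' hs]; exact ⟨y', hy'⟩⟩
  obtain ⟨z, hz, hzc, hz'⟩ := exists_diamLift_of_subEmbed_eq h h' hs q x₁ x' hx'.symm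
  rcases Sym2.mem_iff.mp hzc with rfl | rfl
  · exact .inl (mem_diamStar_of_mem_range h' hz' ⟨y', hy'⟩)
  · exact .inr ⟨z, h, hz⟩

theorem mem_diamStar_of_walk [Nonempty ι] {c : diamV ι t} {a b : diamV ι (t + q)}
    (w : (diamG ι (t + q)).Walk a b) (ha : a ∈ diamStar ι t q c)
    (hw : ∀ x ∈ w.support, ∀ z, (diamG ι t).Adj c z → x ≠ diamLift ι t q z) :
    b ∈ diamStar ι t q c := by
  induction w with
  | nil => exact ha
  | cons h w ih =>
    refine ih ?_ fun x hx => hw x (List.mem_cons_of_mem _ hx)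
    rcases mem_diamStar_or_of_adj ha h with h' | ⟨z, hz, rfl⟩
    · exact h'
    · exact absurd rfl (hw _ (Walk.start_mem_support _) z hz)

theorem mem_diamStar_of_dist_lt [Nonempty ι] (c : diamV ι t) {x : diamV ι (t + q)}
    (hx : (diamG ι (t + q)).dist (diamLift ι t q c) x < 2 ^ q) : x ∈ diamStar ι t q c := by
  obtain ⟨w, hw⟩ := (diamG_connected _).exists_walk_length_eq_dist (diamLift ι t q c) x
  refine mem_diamStar_of_walk w (diamLift_mem_diamStar c) fun y hy z hz hyz => ?_
  have := w.dist_le_length_of_mem_support hy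
  rw [hyz, diamG_dist_diamLift, dist_eq_one_iff_adj.mpr hz] at this
  omega

theorem exists_mem_diamStar_inl [Nonempty ι] {j : ℕ} (x : diamV ι (j + 1 + q)) :
    ∃ u, x ∈ diamStar ι (j + 1) q (Sum.inl u) := by
  obtain ⟨u, v, h, hx⟩ := exists_mem_range_subEmbed (j + 1) q x
  rcases diamG_succ_adj_cases h with ⟨u₀, _, rfl, rfl, _⟩ | ⟨u₀, _, rfl, rfl, _⟩
  · exact ⟨u₀, mem_diamStar_of_mem_range h (Sym2.mem_mk_left _ _) hx⟩
  · exact ⟨u₀, mem_diamStar_of_mem_range h (Sym2.mem_mk_right _ _) hx⟩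

/-- The vertices `diamLift ι (j + 1) q (Sum.inr z)` are those of generation `q + 1`. -/
theorem exists_mem_support_eq_diamLift_inr [Nonempty ι] {j : ℕ} {a b : diamV ι (j + 1 + q)}
    (w : (diamG ι (j + 1 + q)).Walk a b) (hab : 2 ^ (q + 1) < (diamG ι (j + 1 + q)).dist a b) :
    ∃ x ∈ w.support, ∃ z, x = diamLift ι (j + 1) q (Sum.inr z) := by
  by_contra! hw
  obtain ⟨u, ha⟩ := exists_mem_diamStar_inl a
  have hb := mem_diamStar_of_walk w ha fun x hx z hz => by
    rcases z with _ | z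
    · exact absurd hz id
    · exact hw x hx z
  have := dist_diamLift_le_of_mem_diamStar ha
  have hb := dist_diamLift_le_of_mem_diamStar hb
  rw [dist_comm] at hb
  have :=
    (diamG_connected _).dist_triangle (u := a) (v := diamLift ι (j + 1) q (Sum.inl u)) (w := b)
  rw [pow_succ] at hab
  omega

end Star

section Counting

variable {ι : Type}

instance instFiniteDiamV [Finite ι] : ∀ t, Finite (diamV ι t)
  | 0 => inferInstanceAs (Finite Bool)
  | t + 1 =>
    have := instFiniteDiamV t
    inferInstanceAs (Finite (diamV ι t ⊕ ((diamG ι t).edgeSet × ι)))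

theorem card_edgeSet_diamG_zero : Nat.card (diamG ι 0).edgeSet = 1 := by
  refine Nat.card_eq_one_iff_exists.mpr ⟨⟨s(true, false), Bool.noConfusion⟩, ?_⟩
  rintro ⟨e, he⟩
  induction e using Sym2.ind with
  | _ a b =>
    have hab : a ≠ b := he
    cases a <;> cases b <;> first | exact absurd rfl hab | rfl | exact Subtype.ext Sym2.eq_swap

theorem card_edgeSet_diamG_succ_le [Finite ι] (t : ℕ) :
    Nat.card (diamG ι (t + 1)).edgeSet ≤ Nat.card (diamG ι t).edgeSet * Nat.card ι * 2 := by
  let g : (diamG ι t).edgeSet × ι × Bool → (diamG ι (t + 1)).edgeSet := fun ⟨e, i, b⟩ =>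
    ⟨s(Sum.inl (if b then e.1.out.1 else e.1.out.2), Sum.inr (e, i)), by
      cases b
      · exact Sym2.out_snd_mem e.1
      · exact Sym2.out_fst_mem e.1⟩
  have hg : Function.Surjective g := by
    rintro ⟨E, hE⟩
    obtain ⟨u, ⟨e, i⟩, rfl, hu⟩ := diamG_succ_mem_edgeSet hE
    have he : s(e.1.out.1, e.1.out.2) = e.1 := Quot.out_eq e.1
    rcases Sym2.mem_iff.mp (he ▸ hu) with rfl | rfl
    · exact ⟨(e, i, true), rfl⟩
    · exact ⟨(e, i, false), rfl⟩
  simpa [Nat.card_prod, mul_assoc] using Nat.card_le_card_of_surjective g hg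

theorem card_edgeSet_diamG_le [Finite ι] :
    ∀ t : ℕ, Nat.card (diamG ι t).edgeSet ≤ (2 * Nat.card ι) ^ t
  | 0 => card_edgeSet_diamG_zero.le
  | t + 1 => by
    have := card_edgeSet_diamG_le t
    calc Nat.card (diamG ι (t + 1)).edgeSet ≤ Nat.card (diamG ι t).edgeSet * Nat.card ι * 2 :=
          card_edgeSet_diamG_succ_le t
      _ ≤ (2 * Nat.card ι) ^ t * Nat.card ι * 2 := by gcongr
      _ = (2 * Nat.card ι) ^ (t + 1) := by ring

theorem card_neighborSet_inr_le_two {j : ℕ} (z : (diamG ι j).edgeSet × ι) :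
    Nat.card ((diamG ι (j + 1)).neighborSet (Sum.inr z)) ≤ 2 := by
  obtain ⟨⟨e, he⟩, i⟩ := z
  induction e using Sym2.ind with
  | _ a b =>
    let g : Bool → (diamG ι (j + 1)).neighborSet (Sum.inr (⟨s(a, b), he⟩, i)) := fun β =>
      ⟨Sum.inl (if β then a else b), show (if β then a else b) ∈ s(a, b) by cases β <;> simp⟩
    refine (Nat.card_le_card_of_surjective g ?_).trans (by simp)
    rintro ⟨c | _, hc⟩
    · rcases Sym2.mem_iff.mp (show c ∈ s(a, b) from hc) with rfl | rfl
      · exact ⟨true, rfl⟩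
      · exact ⟨false, rfl⟩
    · exact hc.elim

/-- The points lie in distinct subdiamonds of diameter `2 ^ p`, and the star at `w` is the union
of `deg w * |E(D_c)|` of them. -/
theorem card_le_of_forall_mem_diamStar [Finite ι] [Nonempty ι] {t c p : ℕ} {w : diamV ι t}
    {β : Type*} (f : β → diamV ι (t + (c + p))) (hf : ∀ b, f b ∈ diamStar ι t (c + p) w)
    (hsep : Pairwise fun a b => 2 ^ p < (diamG ι (t + (c + p))).dist (f a) (f b)) :
    Nat.card β ≤ Nat.card ((diamG ι t).neighborSet w) * Nat.card (diamG ι c).edgeSet := by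
  choose v hv x₀ hx₀ using hf
  choose u₂ v₂ h₂ x₁ hx₁ using fun b => exists_mem_range_subEmbed c p (x₀ b)
  rw [← Nat.card_prod]
  refine Nat.card_le_card_of_injective (fun b => ((⟨v b, hv b⟩ : (diamG ι t).neighborSet w),
    (⟨s(u₂ b, v₂ b), h₂ b⟩ : (diamG ι c).edgeSet))) fun a b hab => by_contra fun hne => ?_
  obtain ⟨hv', he'⟩ := Prod.mk.inj hab
  obtain ⟨y, hy⟩ : x₀ b ∈ Set.range (subEmbed ι (h₂ a) p) := by
    rw [range_subEmbed_eq (h₂ a) (h₂ b) (congrArg Subtype.val he')]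
    exact ⟨_, hx₁ b⟩
  have hva : ∀ {v'} (h' : (diamG ι t).Adj w v'), v a = v' →
      subEmbed ι (hv a) (c + p) = subEmbed ι h' (c + p) := by
    rintro _ _ rfl
    rfl
  have : 2 ^ p < (diamG ι (t + (c + p))).dist (f a) (f b) := hsep hne
  rw [← hx₀ a, ← hx₀ b, ← hva (hv b) (congrArg Subtype.val hv'), ← hx₁ a, ← hy] at this
  have : (diamG ι _).dist (subEmbed ι (hv a) (c + p) (subEmbed ι (h₂ a) p (x₁ a)))
      (subEmbed ι (hv a) (c + p) (subEmbed ι (h₂ a) p y)) ≤ (diamG ι p).dist (x₁ a) y :=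
    (diamG_connected p).dist_map_le ((subEmbed ι (hv a) (c + p)).comp (subEmbed ι (h₂ a) p)) _ _
  have := diamG_dist_le p (x₁ a) y
  omega

theorem card_le_of_dist_diamLift_inr_lt [Finite ι] [Nonempty ι] {j c p : ℕ}
    (z : (diamG ι j).edgeSet × ι) {β : Type*} (f : β → diamV ι (j + 1 + (c + p)))
    (hf : ∀ b, (diamG ι _).dist (diamLift ι (j + 1) (c + p) (Sum.inr z)) (f b) < 2 ^ (c + p))
    (hsep : Pairwise fun a b => 2 ^ p < (diamG ι (j + 1 + (c + p))).dist (f a) (f b)) :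
    Nat.card β ≤ 2 * (2 * Nat.card ι) ^ c :=
  (card_le_of_forall_mem_diamStar f (fun b => mem_diamStar_of_dist_lt _ (hf b)) hsep).trans
    (Nat.mul_le_mul (card_neighborSet_inr_le_two z) (card_edgeSet_diamG_le c))

end Counting

section Tree

variable {n : ℕ}

theorem treeG_adj_length {u v : treeV n} (h : (treeG n).Adj u v) :
    u.1.length + 1 = v.1.length ∨ v.1.length + 1 = u.1.length := by
  rcases h with ⟨b, hb⟩ | ⟨b, hb⟩ <;> simp [hb]

theorem treeG_dist_append_le (u : treeV n) :
    ∀ (l : List Bool) (h : (l ++ u.1).length ≤ n), (treeG n).dist ⟨l ++ u.1, h⟩ u ≤ l.length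
  | [], _ => (dist_self (G := treeG n) (v := u)).le
  | b :: l, h => by
    have h' : (l ++ u.1).length ≤ n := by simp at h ⊢; omega
    have hadj : (treeG n).Adj ⟨b :: l ++ u.1, h⟩ ⟨l ++ u.1, h'⟩ := .inr ⟨b, rfl⟩
    have := treeG_dist_append_le u l h'
    have := hadj.dist_le_dist_add_one u
    simp only [List.length_cons]
    omega

theorem treeG_connected (n : ℕ) : (treeG n).Connected := by
  have hroot (l : List Bool) (hl : l.length ≤ n) : (treeG n).Reachable ⟨l, hl⟩ (treeRoot n) := by
    induction l with
    | nil => rfl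
    | cons b l ih =>
      have hl' : l.length ≤ n := by simp at hl; omega
      exact (Adj.reachable (.inr ⟨b, rfl⟩ : (treeG n).Adj ⟨b :: l, hl⟩ ⟨l, hl'⟩)).trans (ih hl')
  exact (connected_iff _).mpr ⟨fun u v => (hroot u.1 u.2).trans (hroot v.1 v.2).symm, ⟨treeRoot n⟩⟩

theorem length_le_length_add_dist (u v : treeV n) :
    u.1.length ≤ v.1.length + (treeG n).dist u v := by
  obtain ⟨w, hw⟩ := (treeG_connected n).exists_walk_length_eq_dist u v
  rw [← hw]
  clear hw
  induction w with
  | nil => simp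
  | cons h _ ih =>
    have := treeG_adj_length h
    rw [Walk.length_cons]
    omega

theorem two_le_dist_of_length_eq {u v : treeV n} (hne : u ≠ v) (hl : u.1.length = v.1.length) :
    2 ≤ (treeG n).dist u v := by
  have := (treeG_connected n).pos_dist_of_ne hne
  have : (treeG n).dist u v ≠ 1 := fun h => by
    have := treeG_adj_length (dist_eq_one_iff_adj.mp h)
    omega
  omega

theorem exists_separated_descendants (u : treeV n) {r : ℕ} (hr : u.1.length + r ≤ n) :
    ∃ f : (Fin r → Bool) → treeV n, (∀ σ, (treeG n).dist (f σ) u ≤ r) ∧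
      Pairwise fun σ τ => 2 ≤ (treeG n).dist (f σ) (f τ) := by
  have hlen (σ : Fin r → Bool) : (List.ofFn σ ++ u.1).length ≤ n := by simpa [add_comm] using hr
  refine ⟨fun σ => ⟨List.ofFn σ ++ u.1, hlen σ⟩, fun σ => ?_, fun σ τ hστ => ?_⟩
  · simpa using treeG_dist_append_le u (List.ofFn σ) (hlen σ)
  · refine two_le_dist_of_length_eq (fun h => hστ ?_) (by simp)
    exact List.ofFn_injective (List.append_cancel_right (congrArg Subtype.val h))

theorem exists_treeG_spine (n : ℕ) : ∃ x : ℕ → treeV n,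
    (∀ s < n, (treeG n).Adj (x s) (x (s + 1))) ∧ ∀ s ≤ n, (x s).1.length = s := by
  refine ⟨fun s => ⟨List.replicate (min s n) false, by simp⟩, fun s hs => .inl ⟨false, ?_⟩,
    fun s hs => by simp [hs]⟩
  simp [Nat.min_eq_left hs, Nat.min_eq_left hs.le, List.replicate_succ]

end Tree

theorem two_pow_le_of_treeV_map {ι : Type} [Finite ι] [Nonempty ι] {n m p c r : ℕ}
    (F : treeV n → diamV ι m) {L : ℕ}
    (hlo : ∀ u v, 2 ^ p * (treeG n).dist u v ≤ (diamG ι m).dist (F u) (F v))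
    (hup : ∀ u v, (treeG n).Adj u v → (diamG ι m).dist (F u) (F v) ≤ L)
    (hrn : r < n) (hfar : 2 ^ (c + p + 1) < 2 ^ p * (n - r)) (hnear : L * (r + 1) < 2 ^ (c + p)) :
    2 ^ r ≤ 2 * (2 * Nat.card ι) ^ c := by
  obtain ⟨x, hx_adj, hx_len⟩ := exists_treeG_spine n
  have hlip := (treeG_connected n).dist_le_mul_dist (diamG_connected m) hup
  have hfar : 2 ^ (c + p + 1) < (diamG ι m).dist (F (x 0)) (F (x (n - r))) := by
    have := length_le_length_add_dist (x (n - r)) (x 0)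
    rw [hx_len _ (by omega), hx_len 0 (by omega), SimpleGraph.dist_comm] at this
    exact hfar.trans_le ((Nat.mul_le_mul_left _ (by omega)).trans (hlo _ _))
  obtain ⟨j, rfl⟩ : ∃ j, m = j + 1 + (c + p) := by
    have := (Nat.pow_lt_pow_iff_right (by norm_num)).mp (hfar.trans_le (diamG_dist_le m _ _))
    exact ⟨m - (c + p + 1), by omega⟩
  obtain ⟨W, hW⟩ := (diamG_connected _).exists_walk_near (F ∘ x) (N := n - r) (by omega)
  obtain ⟨_, hw, z, rfl⟩ := exists_mem_support_eq_diamLift_inr W hfar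
  obtain ⟨s, hs, hsw⟩ := hW _ hw
  obtain ⟨f, hf_near, hf_sep⟩ :=
    exists_separated_descendants (x s) (r := r) (by rw [hx_len s (by omega)]; omega)
  refine (le_of_eq ?_).trans
    (card_le_of_dist_diamLift_inr_lt z (F ∘ f) (fun σ => ?_) fun σ τ hστ => ?_)
  · simp
  · have := (diamG_connected _).dist_triangle (u := diamLift ι (j + 1) (c + p) (Sum.inr z))
      (v := F (x s)) (w := F (f σ))
    have := hup _ _ (hx_adj s (by omega))
    have := (hlip (x s) (f σ)).trans
      (Nat.mul_le_mul_left L (SimpleGraph.dist_comm.trans_le (hf_near σ)))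
    rw [SimpleGraph.dist_comm] at hsw
    rw [mul_add_one] at hnear
    simp only [Function.comp_apply] at hsw ⊢
    omega
  · have := (Nat.mul_le_mul_left (2 ^ p) (hf_sep hστ)).trans (hlo (f σ) (f τ))
    have : 0 < 2 ^ p := by positivity
    simp only [Function.comp_apply]
    omega

theorem three_inequalities_contradiction_general (k n m : ℕ) (hk : 2 ≤ k)
    (F : treeV n → diamV (Fin k) m) (p d r : ℕ) (α : ℝ)
    (hF : ∀ u v : treeV n,
      (2 : ℝ) ^ p * (treeG n).dist u v ≤ ((diamG (Fin k) m).dist (F u) (F v) : ℝ) ∧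
      ((diamG (Fin k) m).dist (F u) (F v) : ℝ) ≤ α * 2 ^ p * (treeG n).dist u v)
    (hrn : r < n)
    (h1 : (2 : ℝ) ^ ((d : ℤ) - 1) > α * 2 ^ p * (r + 1))
    (h2 : ((2 * k : ℕ) : ℝ) ^ ((d : ℤ) - (p : ℤ)) < 2 ^ r)
    (h3 : (2 : ℝ) ^ d < 2 ^ p * ((n : ℝ) - r)) : False := by
  have : Nonempty (Fin k) := ⟨⟨0, by omega⟩⟩
  have hp : (0 : ℝ) < 2 ^ p := by positivity
  have hup (u v : treeV n) (huv : (treeG n).Adj u v) :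
      ((diamG (Fin k) m).dist (F u) (F v) : ℝ) ≤ α * 2 ^ p := by
    simpa [dist_eq_one_iff_adj.mpr huv] using (hF u v).2
  have hα : 1 ≤ α := by
    obtain ⟨x, hx_adj, -⟩ := exists_treeG_spine n
    have := (hF (x 0) (x 1)).1
    rw [dist_eq_one_iff_adj.mpr (hx_adj 0 (by omega)), Nat.cast_one, mul_one] at this
    exact le_of_mul_le_mul_right
      (show 1 * (2 : ℝ) ^ p ≤ α * 2 ^ p by linarith [hup _ _ (hx_adj 0 (by omega))]) hp
  have hd : p + 1 ≤ d := by
    by_contra! hd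
    have : (2 : ℝ) ^ ((d : ℤ) - 1) ≤ 2 ^ p := by
      rw [← zpow_natCast]
      exact zpow_le_zpow_right₀ one_le_two (by omega)
    have : 1 ≤ α * (r + 1) := one_le_mul_of_one_le_of_one_le hα (by simp)
    nlinarith
  obtain ⟨c, rfl⟩ : ∃ c, d = c + p + 1 := ⟨d - p - 1, by omega⟩
  rw [show ((c + p + 1 : ℕ) : ℤ) - 1 = (c + p : ℕ) by push_cast; ring, zpow_natCast] at h1
  rw [show ((c + p + 1 : ℕ) : ℤ) - p = (c + 1 : ℕ) by push_cast; ring, zpow_natCast] at h2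
  rw [← Nat.cast_sub hrn.le] at h3
  have hL : (⌊α * 2 ^ p⌋₊ : ℝ) * (r + 1) < 2 ^ (c + p) :=
    lt_of_le_of_lt (by gcongr; exact Nat.floor_le (by positivity)) h1
  have hcard := two_pow_le_of_treeV_map F (fun u v => by exact_mod_cast (hF u v).1)
    (fun u v huv => Nat.le_floor (hup u v huv)) hrn (by exact_mod_cast h3) (by exact_mod_cast hL)
  have : 2 * (2 * k) ^ c ≤ (2 * k) ^ (c + 1) := by rw [pow_succ']; gcongr; omega
  simp only [Nat.card_eq_fintype_card, Fintype.card_fin] at hcard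
  exact absurd h2 (not_lt.mpr (by exact_mod_cast hcard.trans this))

theorem three_inequalities_contradiction (k n m : ℕ) (hk : 2 ≤ k)
    (F : treeV n → diamV (Fin k) m) (p d r : ℕ) (α : ℝ)
    (hF : ∀ u v : treeV n,
      (2 : ℝ) ^ p * (treeG n).dist u v ≤ ((diamG (Fin k) m).dist (F u) (F v) : ℝ) ∧
      ((diamG (Fin k) m).dist (F u) (F v) : ℝ) ≤ α * 2 ^ p * (treeG n).dist u v)
    (hr1 : 1 ≤ r) (hrn : r < n)
    (h1 : (2 : ℝ) ^ ((d : ℤ) - 1) > α * 2 ^ p * (r + 1))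
    (h2 : ((2 * k : ℕ) : ℝ) ^ ((d : ℤ) - (p : ℤ)) < 2 ^ r)
    (h3 : (2 : ℝ) ^ d < 2 ^ p * ((n : ℝ) - r)) : False :=
  three_inequalities_contradiction_general k n m hk F p d r α hF hrn h1 h2 h3
end
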